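/- For every integer d ≥ 2, every odd integer k ≥ 3, and all constants c_1, c_2, c_3 > 0, there exists a constant C > 0 such that for every power q of an odd prime, every (c_1,c_2,c_3)-regular set V ⊆ F_q^d, and every E ⊆ V with |E| > q^{(d−1)/2}, one has Λ_{k−1}(E) Λ_{k+1}(E) ≤ C ( q^{(d−1)(k−2)} |E|^2 + q^{((d−1)(k−3)−2)/2} |E|^{k+1} + q^{−2} |E|^{2k−2} ). -/

import Mathlib

open Finset

/-- `‖x‖ = x₁² + ⋯ + x_d²` for `x ∈ 𝔽_q^d`. -/
def normF {F : Type*} [Field F] {d : ℕ} (x : Fin d → F) : F := ∑ i, x i ^ 2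

/-- The `k`-resultant set `Δ_k(E) = {‖x¹ - x² - ⋯ - x^k‖ : xⁱ ∈ E}` (for `k ≥ 2`):
`y` plays the role of `x¹` and `x 0, …, x (k-2)` play the roles of `x², …, x^k`. -/
def Delta {F : Type*} [Field F] {d : ℕ} (k : ℕ) (E : Set (Fin d → F)) : Set F :=
  {t | ∃ (y : Fin d → F) (x : Fin (k - 1) → Fin d → F),
    y ∈ E ∧ (∀ i, x i ∈ E) ∧ normF (y - ∑ i, x i) = t}

/-- The `2m`-energy `Λ_{2m}(E)`: the number of `2m`-tuples of points of `E`
whose first `m` entries and last `m` entries have equal sums. -/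
noncomputable def energy {F : Type*} [Field F] {d : ℕ} (m : ℕ) (E : Set (Fin d → F)) : ℕ :=
  Nat.card {p : (Fin m → Fin d → F) × (Fin m → Fin d → F) //
    (∀ i, p.1 i ∈ E) ∧ (∀ i, p.2 i ∈ E) ∧ (∑ i, p.1 i) = ∑ i, p.2 i}

/-- The (normalized) Fourier transform of the indicator function of `E ⊆ 𝔽_q^d`,
with respect to the additive character `χ`. -/
noncomputable def ftF {F : Type*} [Field F] [Fintype F] {d : ℕ} (χ : AddChar F ℂ)
    (E : Set (Fin d → F)) (m : Fin d → F) : ℂ :=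
  ((Fintype.card F : ℂ) ^ d)⁻¹ *
    ∑ x : Fin d → F, Set.indicator E (fun y => χ (-(∑ i, m i * y i))) x

/-- `V ⊆ 𝔽_q^d` is `(c₁,c₂,c₃)`-regular (with respect to the character `χ`). -/
def IsRegularVariety {F : Type*} [Field F] [Fintype F] {d : ℕ} (c1 c2 c3 : ℝ) (χ : AddChar F ℂ)
    (V : Set (Fin d → F)) : Prop :=
  c1 * (Fintype.card F : ℝ) ^ (d - 1) ≤ (Nat.card V : ℝ) ∧
  (Nat.card V : ℝ) ≤ c2 * (Fintype.card F : ℝ) ^ (d - 1) ∧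
  ∀ m : Fin d → F, m ≠ 0 →
    ‖ftF χ V m‖ ≤ c3 * (Fintype.card F : ℝ) ^ (-(((d : ℝ) + 1) / 2))

/-- `V ⊆ 𝔽_q²` is a `(c₁,c₂,c₃)`-nondegenerate regular curve defined by a nonzero
polynomial of total degree at most `n` (with respect to the character `χ`). -/
def IsNondegCurve {F : Type*} [Field F] [Fintype F] (c1 c2 c3 : ℝ) (χ : AddChar F ℂ)
    (n : ℕ) (V : Set (Fin 2 → F)) : Prop :=
  (∃ Q : MvPolynomial (Fin 2) F, Q ≠ 0 ∧ Q.totalDegree ≤ n ∧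
      (¬∃ A B : MvPolynomial (Fin 2) F, A.totalDegree = 1 ∧ Q = A * B) ∧
      V = {x | MvPolynomial.eval x Q = 0}) ∧
  c1 * (Fintype.card F : ℝ) ≤ (Nat.card V : ℝ) ∧
  (Nat.card V : ℝ) ≤ c2 * (Fintype.card F : ℝ) ∧
  ∀ m : Fin 2 → F, m ≠ 0 →
    ‖ftF χ V m‖ ≤ c3 * (Fintype.card F : ℝ) ^ (-(3 / 2) : ℝ)

/-!
Write `Ê(ξ) = ∑_{x ∈ E} χ(ξ · x)`, so that `q^d Λ_{2m}(E) = ∑_ξ |Ê(ξ)|^{2m}`. Since `E ⊆ V`,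
`Λ_{2m+2}(E)` is at most the number of solutions of `x¹ + ⋯ + x^{m+1} = y¹ + ⋯ + y^m + v` with
`xⁱ, yʲ ∈ E` and `v ∈ V`. On the Fourier side the term `ξ = 0` contributes `|E|^{2m+1} |V|`; the
other terms are bounded using the decay `|V̂(ξ)| ≤ c₃ q^{-(d+1)/2}` and Cauchy–Schwarz, giving
`q^d Λ_{2m+2} ≤ |E|^{2m+1} |V| + c₃ q^{(d-1)/2} (q^d Λ_{2m})^{1/2} (q^d Λ_{2m+2})^{1/2}`.
Solving this quadratic inequality yields `Λ_{2m+2} ≲ |E|^{2m+1}/q + q^{d-1} Λ_{2m}`, and induction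
using `q^{d-1} ≤ |E|²` gives `Λ_{2m} ≲ |E|^{2m-1}/q + q^{(d-1)(m-1)} |E|`. Multiplying these bounds
for `m = (k ∓ 1)/2` gives the theorem.
-/

open scoped Classical

theorem AddChar.map_sum_eq_prod {A M κ : Type*} [AddCommMonoid A] [CommMonoid M]
    (ψ : AddChar A M) (s : Finset κ) (f : κ → A) :
    ψ (∑ i ∈ s, f i) = ∏ i ∈ s, ψ (f i) := by
  induction s using Finset.induction_on with
  | empty => simp
  | insert a s ha ih => rw [sum_insert ha, prod_insert ha, AddChar.map_add_eq_mul, ih]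

namespace RegularVarietyEnergy

section Fourier

variable {F ι : Type*} [Field F] [Fintype ι] (χ : AddChar F ℂ)

theorem sum_apply_dotProduct [Fintype F] [DecidableEq ι] (hχ : χ ≠ 1) (a : ι → F) :
    ∑ ξ : ι → F, χ (ξ ⬝ᵥ a) = if a = 0 then (Fintype.card F : ℂ) ^ Fintype.card ι else 0 := by
  have hfactor : ∀ i, ∑ t : F, χ (t * a i) = if a i = 0 then (Fintype.card F : ℂ) else 0 :=
    fun i => by exact_mod_cast AddChar.sum_mulShift (a i) (AddChar.IsPrimitive.of_ne_one hχ)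
  have hprod : ∀ ξ : ι → F, χ (ξ ⬝ᵥ a) = ∏ i, χ (ξ i * a i) :=
    fun ξ => χ.map_sum_eq_prod univ _
  simp_rw [hprod]
  rw [← Fintype.prod_sum (fun i t => χ (t * a i))]
  simp_rw [hfactor]
  rw [Fintype.prod_ite_zero]
  simp [funext_iff]

/-- `q^d` times the conjugate of the Fourier transform `ŝ(ξ)`. -/
noncomputable def expSum (s : Finset (ι → F)) (ξ : ι → F) : ℂ :=
  ∑ x ∈ s, χ (ξ ⬝ᵥ x)

theorem expSum_zero (s : Finset (ι → F)) : expSum χ s 0 = s.card := by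
  simp [expSum]

noncomputable def solCount {m n : ℕ} (A : Fin m → Finset (ι → F)) (B : Fin n → Finset (ι → F)) :
    ℕ :=
  #{p ∈ Fintype.piFinset A ×ˢ Fintype.piFinset B | ∑ i, p.1 i = ∑ j, p.2 j}

theorem card_pow_mul_solCount [Fintype F] [DecidableEq ι] (hχ : χ ≠ 1) {m n : ℕ}
    (A : Fin m → Finset (ι → F)) (B : Fin n → Finset (ι → F)) :
    (Fintype.card F : ℂ) ^ Fintype.card ι * solCount A B
      = ∑ ξ : ι → F, (∏ i, expSum χ (A i) ξ) * ∏ j, starRingEnd ℂ (expSum χ (B j) ξ) := by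
  have hterm : ∀ ξ : ι → F, (∏ i, expSum χ (A i) ξ) * ∏ j, starRingEnd ℂ (expSum χ (B j) ξ)
      = ∑ p ∈ Fintype.piFinset A ×ˢ Fintype.piFinset B,
          χ (ξ ⬝ᵥ (∑ i, p.1 i - ∑ j, p.2 j)) := by
    intro ξ
    simp_rw [expSum, map_sum, ← AddChar.map_neg_eq_conj, prod_univ_sum, sum_mul_sum,
      sum_product, ← AddChar.map_sum_eq_prod, ← AddChar.map_add_eq_mul, dotProduct_sub,
      dotProduct_sum, sub_eq_add_neg, sum_neg_distrib]
  simp_rw [hterm]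
  rw [sum_comm]
  simp_rw [sum_apply_dotProduct χ hχ, sub_eq_zero, sum_ite, sum_const_zero, add_zero,
    sum_const, nsmul_eq_mul, solCount, mul_comm]

theorem solCount_mono {m n : ℕ} {A A' : Fin m → Finset (ι → F)} {B B' : Fin n → Finset (ι → F)}
    (hA : ∀ i, A i ⊆ A' i) (hB : ∀ j, B j ⊆ B' j) : solCount A B ≤ solCount A' B' :=
  card_le_card <| filter_subset_filter _ <|
    product_subset_product (Fintype.piFinset_subset _ _ hA) (Fintype.piFinset_subset _ _ hB)

end Fourier

theorem sq_sum_pow_two_mul_add_one_le {κ : Type*} (s : Finset κ) (u : κ → ℝ) (m : ℕ) :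
    (∑ i ∈ s, u i ^ (2 * m + 1)) ^ 2
      ≤ (∑ i ∈ s, u i ^ (2 * m)) * ∑ i ∈ s, u i ^ (2 * (m + 1)) := by
  have h := sum_mul_sq_le_sq_mul_sq s (fun i => u i ^ m) (fun i => u i ^ (m + 1))
  simpa only [← pow_add, ← pow_mul, ← add_assoc, ← two_mul, mul_comm _ 2] using h

theorem le_two_mul_add_of_le_add_of_sq_le {x a b y : ℝ} (ha : 0 ≤ a) (hb : 0 ≤ b)
    (hx : x ≤ a + y) (hy : y ^ 2 ≤ b * x) : x ≤ 2 * a + b := by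
  rcases le_or_gt x a with hxa | hax
  · linarith
  · nlinarith

theorem rpow_sub_one_div_two_sq {q : ℝ} (hq : 0 ≤ q) {d : ℕ} (hd : 1 ≤ d) :
    (q ^ (((d : ℝ) - 1) / 2)) ^ 2 = q ^ (d - 1) := by
  rw [← Real.rpow_natCast, ← Real.rpow_mul hq, ← Real.rpow_natCast q (d - 1), Nat.cast_sub hd]
  congr 1
  push_cast
  ring

section Energy

variable {F : Type*} [Field F] [Fintype F] {d : ℕ} (χ : AddChar F ℂ)

theorem energy_eq_solCount (m : ℕ) (E : Set (Fin d → F)) :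
    energy m E = solCount (fun _ : Fin m => E.toFinset) (fun _ : Fin m => E.toFinset) := by
  rw [energy, Nat.card_eq_fintype_card, Fintype.card_subtype, solCount]
  congr 1
  ext p
  simp [Fintype.mem_piFinset, and_assoc]

theorem energy_one_le (E : Set (Fin d → F)) : energy 1 E ≤ Nat.card E := by
  refine Nat.card_le_card_of_injective (fun p => (⟨p.1.1 0, p.2.1 0⟩ : E)) fun p p' h => ?_
  have hp : ∀ p : (Fin 1 → Fin d → F) × (Fin 1 → Fin d → F),
      ∑ i, p.1 i = ∑ j, p.2 j → p = (fun _ => p.1 0, fun _ => p.1 0) := by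
    rintro ⟨a, b⟩ hab
    simp only [Fin.sum_univ_one] at hab
    ext i : 2 <;> simp [Subsingleton.elim i 0, hab]
  have h0 : p.1.1 0 = p'.1.1 0 := congrArg Subtype.val h
  exact Subtype.ext <| (hp _ p.2.2.2).trans <| h0 ▸ (hp _ p'.2.2.2).symm

theorem card_pow_mul_energy (hχ : χ ≠ 1) (m : ℕ) (E : Set (Fin d → F)) :
    (Fintype.card F : ℝ) ^ d * energy m E = ∑ ξ, ‖expSum χ E.toFinset ξ‖ ^ (2 * m) := by
  have h := card_pow_mul_solCount χ hχ (fun _ : Fin m => E.toFinset) (fun _ : Fin m => E.toFinset)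
  simp_rw [prod_const, card_univ, Fintype.card_fin, ← mul_pow, Complex.mul_conj', ← pow_mul,
    ← energy_eq_solCount] at h
  exact_mod_cast h

theorem card_pow_mul_energy_succ_le (hχ : χ ≠ 1) {E V : Set (Fin d → F)} (hEV : E ⊆ V) (m : ℕ) :
    (Fintype.card F : ℝ) ^ d * energy (m + 1) E
      ≤ (Nat.card E : ℝ) ^ (2 * m + 1) * Nat.card V
        + ∑ ξ ∈ univ.erase 0, ‖expSum χ E.toFinset ξ‖ ^ (2 * m + 1) * ‖expSum χ V.toFinset ξ‖ := by
  set B : Fin (m + 1) → Finset (Fin d → F) := Fin.cons V.toFinset fun _ => E.toFinset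
  have hcount : energy (m + 1) E ≤ solCount (fun _ : Fin (m + 1) => E.toFinset) B := by
    rw [energy_eq_solCount]
    refine solCount_mono (fun _ => subset_rfl) fun j => ?_
    cases j using Fin.cases with
    | zero => exact Set.toFinset_subset_toFinset.mpr hEV
    | succ j => exact subset_rfl
  have hfourier := card_pow_mul_solCount χ hχ (fun _ : Fin (m + 1) => E.toFinset) B
  simp only [B, Fin.prod_univ_succ, Fin.cons_zero, Fin.cons_succ, prod_const, card_univ,
    Fintype.card_fin] at hfourier
  calc (Fintype.card F : ℝ) ^ d * energy (m + 1) E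
      ≤ ‖(Fintype.card F : ℂ) ^ d * solCount (fun _ : Fin (m + 1) => E.toFinset) B‖ := by
        rw [norm_mul, norm_pow, Complex.norm_natCast, Complex.norm_natCast]
        exact mul_le_mul_of_nonneg_left (by exact_mod_cast hcount) (by positivity)
    _ ≤ ∑ ξ, ‖expSum χ E.toFinset ξ‖ ^ (2 * m + 1) * ‖expSum χ V.toFinset ξ‖ := by
        rw [hfourier]
        refine (norm_sum_le _ _).trans (le_of_eq (sum_congr rfl fun ξ _ => ?_))
        simp only [norm_mul, norm_pow, RCLike.norm_conj]
        ring
    _ = _ := by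
        rw [← add_sum_erase _ _ (mem_univ 0), expSum_zero, expSum_zero, Set.toFinset_card,
          Set.toFinset_card, ← Nat.card_eq_fintype_card, ← Nat.card_eq_fintype_card]
        simp

theorem energy_succ_le_of_norm_expSum_le (hχ : χ ≠ 1) {E V : Set (Fin d → F)} (hEV : E ⊆ V)
    {R : ℝ} (hR : ∀ ξ, ξ ≠ 0 → ‖expSum χ V.toFinset ξ‖ ≤ R) (m : ℕ) :
    (Fintype.card F : ℝ) ^ d * energy (m + 1) E
      ≤ 2 * ((Nat.card E : ℝ) ^ (2 * m + 1) * Nat.card V)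
        + R ^ 2 * ((Fintype.card F : ℝ) ^ d * energy m E) := by
  set u := fun ξ => ‖expSum χ E.toFinset ξ‖
  have hpartial : ∀ k, ∑ ξ ∈ univ.erase 0, u ξ ^ (2 * k) ≤ (Fintype.card F : ℝ) ^ d * energy k E :=
    fun k => card_pow_mul_energy χ hχ k E ▸
      sum_le_sum_of_subset_of_nonneg (subset_univ _) fun _ _ _ => by positivity
  refine le_two_mul_add_of_le_add_of_sq_le (by positivity) (by positivity)
    ((card_pow_mul_energy_succ_le χ hχ hEV m).trans ?_)
    (y := (∑ ξ ∈ univ.erase 0, u ξ ^ (2 * m + 1)) * R) ?_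
  · rw [sum_mul]
    gcongr with ξ hξ
    exact hR ξ (ne_of_mem_erase hξ)
  · calc ((∑ ξ ∈ univ.erase 0, u ξ ^ (2 * m + 1)) * R) ^ 2
        = R ^ 2 * (∑ ξ ∈ univ.erase 0, u ξ ^ (2 * m + 1)) ^ 2 := by ring
      _ ≤ R ^ 2 * ((∑ ξ ∈ univ.erase 0, u ξ ^ (2 * m)) *
            ∑ ξ ∈ univ.erase 0, u ξ ^ (2 * (m + 1))) := by
        gcongr
        exact sq_sum_pow_two_mul_add_one_le _ u m
      _ ≤ R ^ 2 * ((Fintype.card F : ℝ) ^ d * energy m E) *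
            ((Fintype.card F : ℝ) ^ d * energy (m + 1) E) := by
        rw [mul_assoc]
        exact mul_le_mul_of_nonneg_left (mul_le_mul (hpartial m) (hpartial (m + 1))
          (sum_nonneg fun _ _ => by positivity) (by positivity)) (sq_nonneg R)

theorem norm_expSum_eq (V : Set (Fin d → F)) (ξ : Fin d → F) :
    ‖expSum χ V.toFinset ξ‖ = (Fintype.card F : ℝ) ^ d * ‖ftF χ V ξ‖ := by
  have hsum := sum_indicator_subset (fun y : Fin d → F => χ (-∑ i, ξ i * y i))
    (subset_univ V.toFinset)
  rw [Set.coe_toFinset] at hsum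
  rw [ftF, norm_mul, norm_inv, norm_pow, Complex.norm_natCast, mul_inv_cancel_left₀ (by simp),
    hsum, expSum]
  simp_rw [AddChar.map_neg_eq_conj, ← map_sum, RCLike.norm_conj]
  rfl

variable {c1 c2 c3 : ℝ} {V E : Set (Fin d → F)}

theorem norm_expSum_le_of_isRegularVariety (hV : IsRegularVariety c1 c2 c3 χ V) {ξ : Fin d → F}
    (hξ : ξ ≠ 0) : ‖expSum χ V.toFinset ξ‖ ≤ c3 * (Fintype.card F : ℝ) ^ (((d : ℝ) - 1) / 2) := by
  have hq : (0 : ℝ) < Fintype.card F := by exact_mod_cast Fintype.card_pos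
  calc ‖expSum χ V.toFinset ξ‖
      ≤ (Fintype.card F : ℝ) ^ d * (c3 * (Fintype.card F : ℝ) ^ (-(((d : ℝ) + 1) / 2))) := by
        rw [norm_expSum_eq]
        gcongr
        exact hV.2.2 ξ hξ
    _ = c3 * (Fintype.card F : ℝ) ^ (((d : ℝ) - 1) / 2) := by
        rw [mul_left_comm, ← Real.rpow_natCast, ← Real.rpow_add hq]
        ring_nf

theorem energy_succ_le_of_isRegularVariety (hχ : χ ≠ 1) (hd : 1 ≤ d)
    (hV : IsRegularVariety c1 c2 c3 χ V) (hEV : E ⊆ V) (m : ℕ) :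
    (energy (m + 1) E : ℝ) ≤ 2 * c2 * ((Nat.card E : ℝ) ^ (2 * m + 1) / Fintype.card F)
      + c3 ^ 2 * (Fintype.card F : ℝ) ^ (d - 1) * energy m E := by
  set q : ℝ := (Fintype.card F : ℝ)
  have hq : 0 < q := Nat.cast_pos.mpr Fintype.card_pos
  have h := energy_succ_le_of_norm_expSum_le χ hχ hEV
    (fun ξ hξ => norm_expSum_le_of_isRegularVariety χ hV hξ) m
  rw [mul_pow, rpow_sub_one_div_two_sq hq.le hd,
    show q ^ d = q ^ (d - 1) * q by rw [← pow_succ, Nat.sub_add_cancel hd]] at h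
  rw [← mul_le_mul_iff_of_pos_left (by positivity : 0 < q ^ (d - 1) * q)]
  calc q ^ (d - 1) * q * energy (m + 1) E
      ≤ 2 * ((Nat.card E : ℝ) ^ (2 * m + 1) * (c2 * q ^ (d - 1)))
        + c3 ^ 2 * q ^ (d - 1) * (q ^ (d - 1) * q * energy m E) := by
        refine h.trans ?_
        gcongr
        exact hV.2.1
    _ = _ := by field_simp

theorem energy_succ_le_pow_of_isRegularVariety (hχ : χ ≠ 1) (hd : 1 ≤ d) (hc2 : 0 ≤ c2)
    (hV : IsRegularVariety c1 c2 c3 χ V) (hEV : E ⊆ V)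
    (hE : (Fintype.card F : ℝ) ^ (d - 1) ≤ (Nat.card E : ℝ) ^ 2) (m : ℕ) :
    (energy (m + 1) E : ℝ) ≤ (1 + 2 * c2 + c3 ^ 2) ^ (m + 1) *
      ((Nat.card E : ℝ) ^ (2 * m + 1) / Fintype.card F
        + ((Fintype.card F : ℝ) ^ (d - 1)) ^ m * Nat.card E) := by
  set q : ℝ := (Fintype.card F : ℝ)
  set N : ℝ := (Nat.card E : ℝ)
  set D := q ^ (d - 1)
  set B := 1 + 2 * c2 + c3 ^ 2 with hB_def
  have hq : 0 < q := Nat.cast_pos.mpr Fintype.card_pos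
  have hB : 1 ≤ B := by simp only [B]; nlinarith [sq_nonneg c3]
  induction m with
  | zero =>
    calc (energy 1 E : ℝ) ≤ N := Nat.cast_le.mpr (energy_one_le E)
      _ ≤ N / q + N := le_add_of_nonneg_left (by positivity)
      _ ≤ B ^ 1 * (N ^ 1 / q + D ^ 0 * N) := by
        rw [pow_one, pow_one, pow_zero, one_mul]
        exact le_mul_of_one_le_left (by positivity) hB
  | succ m ih =>
    set T := N ^ (2 * m + 1) / q + D ^ m * N
    set T' := N ^ (2 * (m + 1) + 1) / q + D ^ (m + 1) * N
    have hT' : 0 ≤ T' := by positivity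
    have hDT : D * T ≤ T' :=
      calc D * T = D * N ^ (2 * m + 1) / q + D ^ (m + 1) * N := by simp only [T]; ring
        _ ≤ N ^ 2 * N ^ (2 * m + 1) / q + D ^ (m + 1) * N := by gcongr
        _ = T' := by simp only [T']; ring
    have hBpow : 1 ≤ B ^ (m + 1) := one_le_pow₀ hB
    calc (energy (m + 1 + 1) E : ℝ)
        ≤ 2 * c2 * (N ^ (2 * (m + 1) + 1) / q) + c3 ^ 2 * D * energy (m + 1) E :=
          energy_succ_le_of_isRegularVariety χ hχ hd hV hEV (m + 1)
      _ ≤ 2 * c2 * T' + c3 ^ 2 * D * (B ^ (m + 1) * T) := by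
          gcongr
          exact le_add_of_nonneg_right (by positivity)
      _ = 2 * c2 * T' + c3 ^ 2 * B ^ (m + 1) * (D * T) := by ring
      _ ≤ 2 * c2 * T' + c3 ^ 2 * B ^ (m + 1) * T' := by gcongr
      _ ≤ B ^ (m + 1 + 1) * T' := by
          have hexpand : B ^ (m + 1 + 1) * T'
              = B ^ (m + 1) * T' + 2 * c2 * (B ^ (m + 1) * T') + c3 ^ 2 * B ^ (m + 1) * T' := by
            rw [hB_def]; ring
          nlinarith [mul_nonneg (mul_nonneg hc2 hT') (sub_nonneg.2 hBpow),
            mul_nonneg (pow_nonneg (zero_le_one.trans hB) (m + 1)) hT']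

end Energy

theorem energy_bound_mul_energy_bound_le {q N D : ℝ} (hq : 0 < q) (hN : 0 ≤ N) (hD : 0 ≤ D)
    (hDN : D ≤ N ^ 2) (s : ℕ) :
    (N ^ (2 * s + 1) / q + D ^ s * N) * (N ^ (2 * (s + 1) + 1) / q + D ^ (s + 1) * N)
      ≤ 2 * (D ^ (2 * s + 1) * N ^ 2 + D ^ s / q * N ^ (2 * s + 4) + N ^ (4 * s + 4) / q ^ 2) := by
  have hcross : D ^ (s + 1) * N ^ (2 * s + 2) / q ≤ D ^ s * N ^ (2 * s + 4) / q := by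
    have h := mul_le_mul_of_nonneg_left hDN (by positivity : 0 ≤ D ^ s * N ^ (2 * s + 2))
    exact div_le_div_of_nonneg_right (by convert h using 1 <;> ring) hq.le
  have hexpand : (N ^ (2 * s + 1) / q + D ^ s * N) * (N ^ (2 * (s + 1) + 1) / q + D ^ (s + 1) * N)
      = N ^ (4 * s + 4) / q ^ 2 + D ^ (s + 1) * N ^ (2 * s + 2) / q
        + D ^ s * N ^ (2 * s + 4) / q + D ^ (2 * s + 1) * N ^ 2 := by
    field_simp
    ring
  rw [hexpand, div_mul_eq_mul_div]
  nlinarith [hcross, (by positivity : 0 ≤ N ^ (4 * s + 4) / q ^ 2),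
    (by positivity : 0 ≤ D ^ (2 * s + 1) * N ^ 2)]

end RegularVarietyEnergy

open RegularVarietyEnergy

theorem stmt_14_general (d k : ℕ) (hd : 2 ≤ d) (hk : 3 ≤ k) (hko : Odd k)
    (c1 c2 c3 : ℝ) (hc2 : 0 < c2) :
    ∃ C : ℝ, 0 < C ∧
      ∀ (F : Type) [Field F] [Fintype F], Odd (Fintype.card F) →
        ∀ χ : AddChar F ℂ, χ ≠ 1 →
          ∀ V : Set (Fin d → F), IsRegularVariety c1 c2 c3 χ V →
            ∀ E : Set (Fin d → F), E ⊆ V →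
              (Fintype.card F : ℝ) ^ (((d : ℝ) - 1) / 2) < (Nat.card E : ℝ) →
              (energy ((k - 1) / 2) E : ℝ) * (energy ((k + 1) / 2) E : ℝ) ≤
                C * ((Fintype.card F : ℝ) ^ ((d - 1) * (k - 2)) * (Nat.card E : ℝ) ^ 2 +
                  (Fintype.card F : ℝ) ^ ((((d : ℝ) - 1) * ((k : ℝ) - 3) - 2) / 2) *
                    (Nat.card E : ℝ) ^ (k + 1) +
                  (Nat.card E : ℝ) ^ (2 * k - 2) / (Fintype.card F : ℝ) ^ 2) := by
  obtain ⟨s, rfl⟩ : ∃ s, k = 2 * s + 3 := by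
    obtain ⟨t, rfl⟩ := hko
    exact ⟨t - 1, by omega⟩
  set B := 1 + 2 * c2 + c3 ^ 2
  have hB : 0 < B := add_pos_of_pos_of_nonneg (by linarith) (sq_nonneg c3)
  refine ⟨2 * B ^ (2 * s + 3), by positivity, fun F _ _ _ χ hχ V hV E hEV hE => ?_⟩
  set q : ℝ := (Fintype.card F : ℝ)
  set N : ℝ := (Nat.card E : ℝ)
  have hq : 0 < q := Nat.cast_pos.mpr Fintype.card_pos
  have hDN : q ^ (d - 1) ≤ N ^ 2 := by
    rw [← rpow_sub_one_div_two_sq hq.le (by omega : 1 ≤ d)]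
    gcongr
  have hmid :
      q ^ ((((d : ℝ) - 1) * (((2 * s + 3 : ℕ) : ℝ) - 3) - 2) / 2) = (q ^ (d - 1)) ^ s / q := by
    rw [← pow_mul, ← Real.rpow_natCast, ← Real.rpow_sub_one hq.ne']
    push_cast [Nat.cast_sub (by omega : 1 ≤ d)]
    ring_nf
  have h1 := energy_succ_le_pow_of_isRegularVariety χ hχ (by omega) hc2.le hV hEV hDN s
  have h2 := energy_succ_le_pow_of_isRegularVariety χ hχ (by omega) hc2.le hV hEV hDN (s + 1)
  rw [show (2 * s + 3 - 1) / 2 = s + 1 by omega, show (2 * s + 3 + 1) / 2 = s + 1 + 1 by omega,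
    show 2 * s + 3 - 2 = 2 * s + 1 by omega, pow_mul, hmid,
    show 2 * (2 * s + 3) - 2 = 4 * s + 4 by omega]
  refine (mul_le_mul h1 h2 (by positivity) (by positivity)).trans ?_
  convert mul_le_mul_of_nonneg_left (energy_bound_mul_energy_bound_le hq (by positivity)
    (by positivity) hDN s) (pow_nonneg hB.le (2 * s + 3)) using 1 <;> ring

/-- for `d ≥ 2`, odd `k ≥ 3` and `c₁, c₂, c₃ > 0` there is `C > 0` such that
for every odd prime power `q`, every `(c₁,c₂,c₃)`-regular `V ⊆ 𝔽_q^d` and every `E ⊆ V` with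
`|E| > q^{(d-1)/2}`, one has
`Λ_{k-1}(E) Λ_{k+1}(E) ≤ C (q^{(d-1)(k-2)} |E|² + q^{((d-1)(k-3)-2)/2} |E|^{k+1} + q^{-2} |E|^{2k-2})`. -/
theorem stmt_14 (d k : ℕ) (hd : 2 ≤ d) (hk : 3 ≤ k) (hko : Odd k)
    (c1 c2 c3 : ℝ) (hc1 : 0 < c1) (hc2 : 0 < c2) (hc3 : 0 < c3) :
    ∃ C : ℝ, 0 < C ∧
      ∀ (F : Type) [Field F] [Fintype F], Odd (Fintype.card F) →
        ∀ χ : AddChar F ℂ, χ ≠ 1 →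
          ∀ V : Set (Fin d → F), IsRegularVariety c1 c2 c3 χ V →
            ∀ E : Set (Fin d → F), E ⊆ V →
              (Fintype.card F : ℝ) ^ (((d : ℝ) - 1) / 2) < (Nat.card E : ℝ) →
              (energy ((k - 1) / 2) E : ℝ) * (energy ((k + 1) / 2) E : ℝ) ≤
                C * ((Fintype.card F : ℝ) ^ ((d - 1) * (k - 2)) * (Nat.card E : ℝ) ^ 2 +
                  (Fintype.card F : ℝ) ^ ((((d : ℝ) - 1) * ((k : ℝ) - 3) - 2) / 2) *
                    (Nat.card E : ℝ) ^ (k + 1) +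
                  (Nat.card E : ℝ) ^ (2 * k - 2) / (Fintype.card F : ℝ) ^ 2) :=
  stmt_14_general d k hd hk hko c1 c2 c3 hc2
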